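/- arXiv:1103.5338 — 3 statements merged into one kernel-verified Lean document; each statement's English description precedes it below -/
import Mathlib

section
/- Let a_h be a symmetric bilinear form on a finite-dimensional space V_h of the abstract form a_h(u,v) = s(u,v) + t²[d(u,v) + (α) j(u,v) - c(u,v) - c(v,u)] where s, d, j are positive semidefinite symmetric bilinear forms and c satisfies |c(v,v')| ≤ (C_I)^{1/2} d(v,v)^{1/2} j(v',v')^{1/2} for all v, v' ∈ V_h. If α > C_I, then a_h(v,v) ≥ min{1, 1 - C_I/α}·(s(v,v) + t²/2·(d(v,v) + α j(v,v))) for all v ∈ V_h; in particular a_h is coercive with respect to the norm v ↦ (s(v,v) + t²(d(v,v) + j(v,v)))^{1/2}. -/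
/-- Coercivity of the abstract Nitsche-type bilinear form
`a_h(u,v) = s(u,v) + t²[d(u,v) + α j(u,v) - c(u,v) - c(v,u)]`:
if `α > C_I` then `a_h(v,v) ≥ min{1, 1 - C_I/α}(s(v,v) + t²/2 (d(v,v) + α j(v,v)))`,
and in particular `a_h` is coercive w.r.t. `v ↦ (s(v,v) + t²(d(v,v)+j(v,v)))^{1/2}`. -/
theorem nitsche_coercivity {V : Type*} [AddCommGroup V] [Module ℝ V]
    [FiniteDimensional ℝ V]
    (s d j c : V →ₗ[ℝ] V →ₗ[ℝ] ℝ)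
    (hs_symm : ∀ u v, s u v = s v u) (hd_symm : ∀ u v, d u v = d v u)
    (hj_symm : ∀ u v, j u v = j v u)
    (hs_pos : ∀ v, 0 ≤ s v v) (hd_pos : ∀ v, 0 ≤ d v v) (hj_pos : ∀ v, 0 ≤ j v v)
    (t α CI : ℝ) (ht : 0 ≤ t) (hCI : 0 < CI) (hα : CI < α)
    (hc : ∀ v v', (c v v') ^ 2 ≤ CI * d v v * j v' v') :
    (∀ v, s v v + t ^ 2 * (d v v + α * j v v - c v v - c v v) ≥
        min 1 (1 - CI / α) * (s v v + t ^ 2 / 2 * (d v v + α * j v v))) ∧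
    ∃ C > (0 : ℝ), ∀ v,
      s v v + t ^ 2 * (d v v + α * j v v - c v v - c v v) ≥
        C * (s v v + t ^ 2 * (d v v + j v v)) := by
  have hα0 : (0:ℝ) < α := hCI.trans hα
  have hm1 : (1 - CI / α) < 1 := by
    have : 0 < CI / α := div_pos hCI hα0
    linarith
  have hm0 : 0 < 1 - CI / α := by
    have : CI / α < 1 := (div_lt_one hα0).mpr hα
    linarith
  have hmin : min 1 (1 - CI / α) = 1 - CI / α := min_eq_right (le_of_lt hm1)
  -- key pointwise inequality
  have key : ∀ v, d v v + α * j v v - 2 * c v v ≥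
      (1 - CI / α) / 2 * (d v v + α * j v v) := by
    intro v
    have hD := hd_pos v
    have hJ := hj_pos v
    have hC := hc v v
    set D := d v v
    set J := j v v
    set C := c v v
    have hX : 0 ≤ (α + CI) * D + α * (α + CI) * J := by positivity
    have hsq : (4 * α * C) ^ 2 ≤ ((α + CI) * D + α * (α + CI) * J) ^ 2 := by
      nlinarith [sq_nonneg ((α + CI) * D - α * (α + CI) * J),
        mul_nonneg (mul_nonneg hD hJ) (sq_nonneg (α - CI)),
        mul_nonneg (mul_nonneg hD hJ) hα0.le, mul_pos hα0 hα0]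
    have hlin : 4 * α * C ≤ (α + CI) * D + α * (α + CI) * J := by
      nlinarith [hsq, hX, sq_nonneg ((α + CI) * D + α * (α + CI) * J - 4 * α * C)]
    have hk : (α - CI) * (D + α * J) ≤ (D + α * J - 2 * C) * (2 * α) := by
      nlinarith [hlin]
    have heq : (1 - CI / α) / 2 = (α - CI) / (2 * α) := by
      rw [div_eq_div_iff (by norm_num : (2:ℝ) ≠ 0) (by positivity : (2*α:ℝ) ≠ 0)]
      field_simp
    rw [ge_iff_le, heq, div_mul_eq_mul_div, div_le_iff₀ (by positivity)]
    exact hk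
  have main : ∀ v, s v v + t ^ 2 * (d v v + α * j v v - c v v - c v v) ≥
      (1 - CI / α) * (s v v + t ^ 2 / 2 * (d v v + α * j v v)) := by
    intro v
    have h1 := key v
    have hS := hs_pos v
    have ht2 : 0 ≤ t ^ 2 := sq_nonneg t
    nlinarith [mul_le_mul_of_nonneg_left h1 ht2]
  constructor
  · intro v
    rw [hmin]; exact main v
  · refine ⟨(1 - CI / α) / 2 * min 1 α, by positivity, fun v => ?_⟩
    have h1 := main v
    have hS := hs_pos v
    have hD := hd_pos v
    have hJ := hj_pos v
    have ht2 : 0 ≤ t ^ 2 := sq_nonneg t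
    have hle : (1 - CI / α) / 2 * min 1 α * (s v v + t ^ 2 * (d v v + j v v)) ≤
        (1 - CI / α) * (s v v + t ^ 2 / 2 * (d v v + α * j v v)) := by
      rcases le_total (1:ℝ) α with h | h
      · rw [min_eq_left h]
        nlinarith [mul_nonneg hm0.le hS,
          mul_nonneg (mul_nonneg (mul_nonneg hm0.le ht2) hJ) (by linarith : (0:ℝ) ≤ α - 1),
          mul_nonneg (mul_nonneg hm0.le ht2) hD]
      · rw [min_eq_right h]
        nlinarith [mul_nonneg (mul_nonneg hm0.le hS) (by linarith : (0:ℝ) ≤ 2 - α),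
          mul_nonneg (mul_nonneg (mul_nonneg hm0.le ht2) hD) (by linarith : (0:ℝ) ≤ 1 - α),
          mul_nonneg (mul_nonneg (mul_nonneg hm0.le ht2) hJ) hα0.le]
    linarith
end

section
/- Abstract Babuška-Brezzi full stability: Let V and Q be normed spaces, a : V × V → R coercive on V with constant α > 0 and bounded with constant M_a, b : V × Q → R bounded with constant M_b and satisfying the inf-sup condition sup_{v≠0} b(v,q)/‖v‖ ≥ β‖q‖ for all q ∈ Q. Define B(r,s; v,q) = a(r,v) + b(v,s) + b(r,q). Then there exists a constant C > 0, depending only on α, β, M_a, M_b, such that for all (r,s) ∈ V × Q, sup_{(v,q)≠0} B(r,s; v,q)/(‖v‖ + ‖q‖) ≥ C(‖r‖ + ‖s‖). -/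
/-!
Given `(r, s)`, take `w` with `‖w‖ = ‖s‖` and `β‖s‖² ≤ b(w, s)` (a rescaled inf-sup witness) and
test with `v = r + δ w`, `q = -s`. The two `b(r, s)` terms cancel, leaving
`a(r, r) + δ a(r, w) + δ b(w, s) ≥ α‖r‖² - δ M_a‖r‖‖s‖ + δ β‖s‖²`; the choice `δ = αβ / M_a²`
turns the right-hand side into `α (R² - κ R S + κ² S²) ≥ (α/2)(R² + κ² S²)` with `κ = β / M_a`.
Since `‖v‖ + ‖q‖ ≤ (1 + δ)(‖r‖ + ‖s‖)`, this is the claimed estimate.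
-/

section

variable {V Q : Type*} [NormedAddCommGroup V] [NormedSpace ℝ V]
  [NormedAddCommGroup Q] [NormedSpace ℝ Q]

lemma le_of_coercive_of_bounded (a : V →ₗ[ℝ] V →ₗ[ℝ] ℝ) {α Ma : ℝ}
    (ha_coer : ∀ v, α * ‖v‖ ^ 2 ≤ a v v) (ha_bdd : ∀ u v, |a u v| ≤ Ma * ‖u‖ * ‖v‖)
    {v : V} (hv : v ≠ 0) : α ≤ Ma := by
  have hv' : 0 < ‖v‖ ^ 2 := by positivity
  refine le_of_mul_le_mul_right ?_ hv'
  calc α * ‖v‖ ^ 2 ≤ |a v v| := (ha_coer v).trans (le_abs_self _)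
    _ ≤ Ma * ‖v‖ ^ 2 := by linarith [ha_bdd v v]

lemma exists_norm_eq_le_of_exists_ne (f : V →ₗ[ℝ] ℝ) {c t : ℝ} (ht : 0 ≤ t)
    (h : ∃ v, v ≠ 0 ∧ c * ‖v‖ ≤ f v) : ∃ w, ‖w‖ = t ∧ c * t ≤ f w := by
  obtain ⟨v, hv, hcv⟩ := h
  have hv' : 0 < ‖v‖ := norm_pos_iff.mpr hv
  refine ⟨(t / ‖v‖) • v, ?_, ?_⟩
  · rw [norm_smul, Real.norm_of_nonneg (by positivity), div_mul_cancel₀ _ hv'.ne']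
  · calc c * t = t / ‖v‖ * (c * ‖v‖) := by field_simp
      _ ≤ t / ‖v‖ * f v := by gcongr
      _ = f ((t / ‖v‖) • v) := by rw [map_smul, smul_eq_mul]

lemma min_one_sq_mul_add_sq_le (R S κ : ℝ) :
    min 1 (κ ^ 2) * (R + S) ^ 2 ≤ 2 * (R ^ 2 + κ ^ 2 * S ^ 2) := by
  have hm : 0 ≤ min 1 (κ ^ 2) := by positivity
  have hR : min 1 (κ ^ 2) * R ^ 2 ≤ R ^ 2 :=
    mul_le_of_le_one_left (sq_nonneg R) (min_le_left _ _)
  have hS : min 1 (κ ^ 2) * S ^ 2 ≤ κ ^ 2 * S ^ 2 := by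
    gcongr
    exact min_le_right _ _
  nlinarith [mul_nonneg hm (sq_nonneg (R - S))]

lemma combined_form_test_lower_bound (a : V →ₗ[ℝ] V →ₗ[ℝ] ℝ) (b : V →ₗ[ℝ] Q →ₗ[ℝ] ℝ)
    {α Ma β : ℝ} (hα : 0 ≤ α) (hβ : 0 ≤ β) (hMa : 0 < Ma)
    (ha_coer : ∀ v, α * ‖v‖ ^ 2 ≤ a v v) (ha_bdd : ∀ u v, |a u v| ≤ Ma * ‖u‖ * ‖v‖)
    (r : V) (s : Q) {w : V} (hw : ‖w‖ = ‖s‖) (hbw : β * ‖s‖ * ‖s‖ ≤ b w s) :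
    α / 2 * (‖r‖ ^ 2 + (β / Ma) ^ 2 * ‖s‖ ^ 2) ≤
      a r (r + (α * β / Ma ^ 2) • w) + b (r + (α * β / Ma ^ 2) • w) s
        + b r (-s) := by
  set δ := α * β / Ma ^ 2
  have hδ : 0 ≤ δ := by positivity
  have hcross : -(Ma * ‖r‖ * ‖s‖) ≤ a r w := by
    rw [← hw]
    exact (abs_le.mp (ha_bdd r w)).1
  have hsquare : α * ‖r‖ ^ 2 - δ * (Ma * ‖r‖ * ‖s‖) + δ * (β * ‖s‖ * ‖s‖) =
      α / 2 * (‖r‖ ^ 2 + (β / Ma) ^ 2 * ‖s‖ ^ 2) + α / 2 * (‖r‖ - β / Ma * ‖s‖) ^ 2 := by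
    simp only [δ]
    field_simp
    ring
  have hexpand : a r (r + δ • w) + b (r + δ • w) s + b r (-s) =
      a r r + δ * a r w + δ * b w s := by
    simp only [map_add, map_smul, map_neg, smul_eq_mul, LinearMap.add_apply,
      LinearMap.smul_apply]
    ring
  rw [hexpand]
  linarith [ha_coer r, mul_le_mul_of_nonneg_left hcross hδ,
    mul_le_mul_of_nonneg_left hbw hδ, mul_nonneg hα (sq_nonneg (‖r‖ - β / Ma * ‖s‖))]

end

theorem babuska_brezzi_full_stability_general
    {V Q : Type*} [NormedAddCommGroup V] [NormedSpace ℝ V]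
    [NormedAddCommGroup Q] [NormedSpace ℝ Q]
    (a : V →ₗ[ℝ] V →ₗ[ℝ] ℝ) (b : V →ₗ[ℝ] Q →ₗ[ℝ] ℝ)
    (α Ma β : ℝ) (hα : 0 < α) (hβ : 0 < β)
    (ha_coer : ∀ v, α * ‖v‖ ^ 2 ≤ a v v)
    (ha_bdd : ∀ u v, |a u v| ≤ Ma * ‖u‖ * ‖v‖)
    (hb_infsup : ∀ q : Q, ∃ v : V, v ≠ 0 ∧ β * ‖q‖ * ‖v‖ ≤ b v q) :
    ∃ C > (0 : ℝ), ∀ (r : V) (s : Q), ∃ (v : V) (q : Q),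
      ¬(v = 0 ∧ q = 0) ∧
      C * (‖r‖ + ‖s‖) * (‖v‖ + ‖q‖) ≤ a r v + b v s + b r q := by
  obtain ⟨v₀, hv₀, -⟩ := hb_infsup 0
  have hMa : 0 < Ma := hα.trans_le (le_of_coercive_of_bounded a ha_coer ha_bdd hv₀)
  set κ := β / Ma
  set δ := α * β / Ma ^ 2
  have hδ : 0 ≤ δ := by positivity
  refine ⟨α * min 1 (κ ^ 2) / (4 * (1 + δ)), by positivity, fun r s => ?_⟩
  by_cases hrs : r = 0 ∧ s = 0
  · obtain ⟨rfl, rfl⟩ := hrs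
    exact ⟨v₀, 0, fun h => hv₀ h.1, by simp⟩
  obtain ⟨w, hw, hbw⟩ :=
    exists_norm_eq_le_of_exists_ne (b.flip s) (norm_nonneg s) (hb_infsup s)
  refine ⟨r + δ • w, -s, ?_, ?_⟩
  · rintro ⟨hv, hq⟩
    have hs : s = 0 := neg_eq_zero.mp hq
    have hw₀ : w = 0 := norm_eq_zero.mp (hw.trans (norm_eq_zero.mpr hs))
    exact hrs ⟨by simpa [hw₀] using hv, hs⟩
  have hnorm : ‖r + δ • w‖ + ‖-s‖ ≤ (1 + δ) * (‖r‖ + ‖s‖) := by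
    have := norm_add_le r (δ • w)
    rw [norm_smul, Real.norm_of_nonneg hδ, hw] at this
    rw [norm_neg]
    nlinarith [norm_nonneg r]
  calc α * min 1 (κ ^ 2) / (4 * (1 + δ)) * (‖r‖ + ‖s‖) * (‖r + δ • w‖ + ‖-s‖)
      ≤ α * min 1 (κ ^ 2) / (4 * (1 + δ)) * (‖r‖ + ‖s‖) * ((1 + δ) * (‖r‖ + ‖s‖)) := by
        gcongr
    _ = α / 4 * (min 1 (κ ^ 2) * (‖r‖ + ‖s‖) ^ 2) := by field_simp
    _ ≤ α / 4 * (2 * (‖r‖ ^ 2 + κ ^ 2 * ‖s‖ ^ 2)) :=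
        mul_le_mul_of_nonneg_left (min_one_sq_mul_add_sq_le _ _ _) (by positivity)
    _ = α / 2 * (‖r‖ ^ 2 + κ ^ 2 * ‖s‖ ^ 2) := by ring
    _ ≤ _ := combined_form_test_lower_bound a b hα.le hβ.le hMa ha_coer ha_bdd r s hw hbw

/-- Abstract Babuška–Brezzi full stability: if `a` is coercive and bounded on `V`
and `b` is bounded on `V × Q` and satisfies the inf-sup condition, then the
combined form `B(r,s;v,q) = a(r,v) + b(v,s) + b(r,q)` satisfies a full
inf-sup stability estimate with a constant depending only on `α, β, M_a, M_b`. -/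
theorem babuska_brezzi_full_stability
    {V Q : Type*} [NormedAddCommGroup V] [NormedSpace ℝ V] [Nontrivial V]
    [NormedAddCommGroup Q] [NormedSpace ℝ Q]
    (a : V →ₗ[ℝ] V →ₗ[ℝ] ℝ) (b : V →ₗ[ℝ] Q →ₗ[ℝ] ℝ)
    (α Ma Mb β : ℝ) (hα : 0 < α) (hβ : 0 < β)
    (ha_coer : ∀ v, α * ‖v‖ ^ 2 ≤ a v v)
    (ha_bdd : ∀ u v, |a u v| ≤ Ma * ‖u‖ * ‖v‖)
    (hb_bdd : ∀ v q, |b v q| ≤ Mb * ‖v‖ * ‖q‖)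
    (hb_infsup : ∀ q : Q, ∃ v : V, v ≠ 0 ∧ β * ‖q‖ * ‖v‖ ≤ b v q) :
    ∃ C > (0 : ℝ), ∀ (r : V) (s : Q), ∃ (v : V) (q : Q),
      ¬(v = 0 ∧ q = 0) ∧
      C * (‖r‖ + ‖s‖) * (‖v‖ + ‖q‖) ≤ a r v + b v s + b r q :=
  babuska_brezzi_full_stability_general a b α Ma β hα hβ ha_coer ha_bdd hb_infsup
end

section
/- Quasi-optimality from consistency and stability: Let B_h be a bilinear form on (V_h × Q_h) × (V_h × Q_h) that is bounded with constant M and satisfies the inf-sup stability sup_{(v,q)} B_h(r,s;v,q)/(‖v‖_V + ‖q‖_Q) ≥ C(‖r‖_V + ‖s‖_Q). Suppose the exact solution (u,p) and discrete solution (u_h,p_h) satisfy the Galerkin orthogonality B_h(u - u_h, p - p_h; v, q) = 0 for all (v,q) ∈ V_h × Q_h, and that b(v, p - P_h p) = 0 for all v ∈ V_h and b(u - R_h u, q) = 0 for all q ∈ Q_h (where B_h(u,p;v,q) = a_h(u,v) + b(v,p) + b(u,q)). Then ‖u - u_h‖_V + ‖P_h p - p_h‖_Q ≤ C' ‖u -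 R_h u‖_V for a constant C' depending only on M and C. -/
/-- Quasi-optimality from consistency and stability: if the saddle form
`B_h(r,s;v,q) = a_h(r,v) + b(v,s) + b(r,q)` is bounded with constant `M`,
inf-sup stable on `V_h × Q_h` with constant `C`, and the discrete and exact
solutions satisfy Galerkin orthogonality together with the projection
orthogonalities `b(v, p - P_h p) = 0` and `b(u - R_h u, q) = 0`, then
`‖u - u_h‖ + ‖P_h p - p_h‖ ≤ C' ‖u - R_h u‖` with `C'` depending only
on `M` and `C`. -/
theorem quasi_optimality
    {V Q : Type*} [NormedAddCommGroup V] [NormedSpace ℝ V]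
    [NormedAddCommGroup Q] [NormedSpace ℝ Q]
    (a : V →ₗ[ℝ] V →ₗ[ℝ] ℝ) (b : V →ₗ[ℝ] Q →ₗ[ℝ] ℝ)
    (Vh : Submodule ℝ V) (Qh : Submodule ℝ Q) (M C : ℝ)
    (hMa : ∀ u v, |a u v| ≤ M * ‖u‖ * ‖v‖)
    (hMb : ∀ v q, |b v q| ≤ M * ‖v‖ * ‖q‖)
    (hC : 0 < C)
    (hstab : ∀ r ∈ Vh, ∀ s ∈ Qh, ∃ v ∈ Vh, ∃ q ∈ Qh,
      ¬(v = 0 ∧ q = 0) ∧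
      C * (‖r‖ + ‖s‖) * (‖v‖ + ‖q‖) ≤ a r v + b v s + b r q) :
    ∃ C' > (0 : ℝ), ∀ (u uh Rhu : V) (p ph Php : Q),
      uh ∈ Vh → Rhu ∈ Vh → ph ∈ Qh → Php ∈ Qh →
      (∀ v ∈ Vh, ∀ q ∈ Qh, a (u - uh) v + b v (p - ph) + b (u - uh) q = 0) →
      (∀ v ∈ Vh, b v (p - Php) = 0) →
      (∀ q ∈ Qh, b (u - Rhu) q = 0) →
      ‖u - uh‖ + ‖Php - ph‖ ≤ C' * ‖u - Rhu‖ := by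
  refine ⟨1 + |M| / C, by positivity, ?_⟩
  intro u uh Rhu p ph Php huh hRhu hph hPhp hG hb1 hb2
  obtain ⟨v, hv, q, hq, hne, hst⟩ :=
    hstab (Rhu - uh) (Vh.sub_mem hRhu huh) (Php - ph) (Qh.sub_mem hPhp hph)
  have key : a (Rhu - uh) v + b v (Php - ph) + b (Rhu - uh) q = a (Rhu - u) v := by
    have h1 := hG v hv q hq
    have h2 := hb1 v hv
    have h3 := hb2 q hq
    simp only [map_sub, LinearMap.sub_apply] at *
    linarith
  have hvq : 0 < ‖v‖ + ‖q‖ := by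
    have := norm_nonneg v
    have := norm_nonneg q
    rcases (lt_or_eq_of_le (norm_nonneg v)).symm with h | h
    · rcases (lt_or_eq_of_le (norm_nonneg q)).symm with h' | h'
      · exact absurd ⟨by simpa using h.symm, by simpa using h'.symm⟩ hne
      · linarith
    · linarith
  have ha := (abs_le.mp (hMa (Rhu - u) v)).2
  have hMabs : M * ‖Rhu - u‖ * ‖v‖ ≤ |M| * ‖u - Rhu‖ * (‖v‖ + ‖q‖) := by
    rw [show ‖Rhu - u‖ = ‖u - Rhu‖ from norm_sub_rev _ _]
    have h1 : M ≤ |M| := le_abs_self M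
    calc M * ‖u - Rhu‖ * ‖v‖ ≤ |M| * ‖u - Rhu‖ * ‖v‖ :=
          mul_le_mul_of_nonneg_right
            (mul_le_mul_of_nonneg_right h1 (norm_nonneg _)) (norm_nonneg _)
      _ ≤ |M| * ‖u - Rhu‖ * (‖v‖ + ‖q‖) :=
          mul_le_mul_of_nonneg_left (by linarith [norm_nonneg q]) (by positivity)
  have hX : C * (‖Rhu - uh‖ + ‖Php - ph‖) ≤ |M| * ‖u - Rhu‖ := by
    have := hst.trans (key ▸ ha.trans hMabs)
    exact le_of_mul_le_mul_right (by nlinarith) hvq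
  have hXX : ‖Rhu - uh‖ + ‖Php - ph‖ ≤ |M| / C * ‖u - Rhu‖ := by
    rw [div_mul_eq_mul_div, le_div_iff₀ hC]
    nlinarith
  have htri : ‖u - uh‖ ≤ ‖u - Rhu‖ + ‖Rhu - uh‖ := by
    simpa using norm_add_le (u - Rhu) (Rhu - uh)
  nlinarith [norm_nonneg (u - Rhu)]
end
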